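/- (Generalized von Neumann inequality, cyclic group form) Let p be a prime, k ≥ 2, and let b_2, ..., b_k be distinct nonzero elements of ℤ/pℤ, all distinct from each other. For any functions f_1, f_2, ..., f_k : ℤ/pℤ → ℂ bounded in magnitude by 1, |E_{m, j ∈ ℤ/pℤ} f_1(j) · f_2(j + m·b_2) ⋯ f_k(j + m·b_k)| ≤ ‖f_1‖_{U^{k-1}(ℤ/pℤ)}. -/

import Mathlib

/-- The Gowers `U^d` average `E_{x,h₁,...,h_d ∈ ℤ/pℤ} ∏_{ω ∈ {0,1}^d} C^{|ω|} f(x + ω·h)`. -/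
noncomputable def gowersUavg (p d : ℕ) [NeZero p] (f : ZMod p → ℂ) : ℂ :=
  (1 / (p : ℂ) ^ (d + 1)) * ∑ x : ZMod p, ∑ h : Fin d → ZMod p,
    ∏ ω : Fin d → Bool,
      (if Even ((Finset.univ.filter fun i => ω i = true).card)
        then f (x + ∑ i, if ω i then h i else 0)
        else (starRingEnd ℂ) (f (x + ∑ i, if ω i then h i else 0)))

/-- The Gowers uniformity norm `‖f‖_{U^d(ℤ/pℤ)}`. -/
noncomputable def gowersNorm (p d : ℕ) [NeZero p] (f : ZMod p → ℂ) : ℝ :=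
  (gowersUavg p d f).re ^ ((1 : ℝ) / 2 ^ d)

/-!
Write `Λ(c; F) = 𝔼_{m,j} ∏ᵢ Fᵢ(j + m cᵢ)`. Translating `j` by `m c_last` and applying
Cauchy–Schwarz in `j` removes the last function: `|Λ(c; F)|² ≤ 𝔼_t |Λ(c'; Fᵗ)|`, where
`c'ᵢ = cᵢ - c_last` are again distinct and `Fᵗᵢ(x) = Fᵢ(x) · conj Fᵢ(x + t c'ᵢ)` is a multiplicative
derivative. With two functions `Λ = 𝔼 F₀ · 𝔼 F₁`, so `|Λ|² ≤ |𝔼 F₀|² = ‖F₀‖_{U¹}²`. Inductively,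
raising the van der Corput bound to the power `2^(k-2)` and using Jensen gives
`|Λ|^(2^(k-1)) ≤ 𝔼_t ‖Δ_{t c'₀} F₀‖_{U^(k-2)}^(2^(k-2))`, and since `c'₀ ≠ 0` the shift `t c'₀` runs
over all of `ℤ/pℤ`, which is the recursion `‖g‖_{U^(d+1)}^(2^(d+1)) = 𝔼_s ‖Δ_s g‖_{U^d}^(2^d)`.
-/

open Finset
open scoped BigOperators ComplexConjugate

noncomputable def conjPow (n : ℕ) (z : ℂ) : ℂ := if Even n then z else conj z

lemma conjPow_mul (n : ℕ) (a b : ℂ) : conjPow n (a * b) = conjPow n a * conjPow n b := by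
  unfold conjPow
  split_ifs <;> simp

lemma conjPow_succ (n : ℕ) (z : ℂ) : conjPow (n + 1) z = conjPow n (conj z) := by
  unfold conjPow
  rcases Nat.even_or_odd n with h | h
  · simp [h, Nat.even_add_one]
  · simp [Nat.even_add_one, Nat.not_even_iff_odd.2 h]

noncomputable def mulDeriv {p : ℕ} (s : ZMod p) (g : ZMod p → ℂ) (x : ZMod p) : ℂ :=
  g x * conj (g (x + s))

lemma norm_mulDeriv_le_one {p : ℕ} {g : ZMod p → ℂ} (hg : ∀ x, ‖g x‖ ≤ 1) (s x : ZMod p) :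
    ‖mulDeriv s g x‖ ≤ 1 := by
  rw [mulDeriv, norm_mul, Complex.norm_conj]
  exact mul_le_one₀ (hg x) (norm_nonneg _) (hg _)

lemma card_filter_cons_eq_true {d : ℕ} (b : Bool) (ω : Fin d → Bool) :
    #{i | (Fin.cons b ω : Fin (d + 1) → Bool) i = true} = b.toNat + #{i | ω i = true} := by
  simp only [card_filter, Fin.sum_univ_succ, Fin.cons_zero, Fin.cons_succ]
  cases b <;> rfl

lemma sum_ite_cons {M : Type*} [AddCommMonoid M] {d : ℕ} (b : Bool) (ω : Fin d → Bool) (s : M)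
    (h : Fin d → M) :
    ∑ i, (if (Fin.cons b ω : Fin (d + 1) → Bool) i then (Fin.cons s h : Fin (d + 1) → M) i else 0)
      = (if b then s else 0) + ∑ i, if ω i then h i else 0 := by
  simp only [Fin.sum_univ_succ, Fin.cons_zero, Fin.cons_succ]

lemma Fintype.sum_pi_fin_succ {M β : Type*} [AddCommMonoid M] [Fintype β] {d : ℕ}
    (Q : (Fin (d + 1) → β) → M) :
    ∑ h, Q h = ∑ s, ∑ h : Fin d → β, Q (Fin.cons s h) := by
  rw [← Fintype.sum_prod_type']
  exact (Fintype.sum_equiv (Fin.consEquiv fun _ => β) _ _ fun _ => rfl).symm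

lemma Fintype.prod_pi_fin_succ {M β : Type*} [CommMonoid M] [Fintype β] {d : ℕ}
    (Q : (Fin (d + 1) → β) → M) :
    ∏ h, Q h = ∏ s, ∏ h : Fin d → β, Q (Fin.cons s h) := by
  rw [← Fintype.prod_prod_type']
  exact (Fintype.prod_equiv (Fin.consEquiv fun _ => β) _ _ fun _ => rfl).symm

lemma gowersUavg_eq_conjPow (p d : ℕ) [NeZero p] (f : ZMod p → ℂ) :
    gowersUavg p d f = (1 / (p : ℂ) ^ (d + 1)) * ∑ x : ZMod p, ∑ h : Fin d → ZMod p,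
      ∏ ω : Fin d → Bool, conjPow #{i | ω i = true} (f (x + ∑ i, if ω i then h i else 0)) :=
  rfl

lemma gowersUavg_succ (p d : ℕ) [NeZero p] (g : ZMod p → ℂ) :
    gowersUavg p (d + 1) g = 𝔼 s, gowersUavg p d (mulDeriv s g) := by
  have cube : ∀ x s (h : Fin d → ZMod p),
      ∏ ω : Fin (d + 1) → Bool, conjPow #{i | ω i = true}
          (g (x + ∑ i, if ω i then (Fin.cons s h : Fin (d + 1) → ZMod p) i else 0))
        = ∏ ω : Fin d → Bool, conjPow #{i | ω i = true}
          (mulDeriv s g (x + ∑ i, if ω i then h i else 0)) := by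
    intro x s h
    -- splitting off `ω 0` pairs each vertex `x + ω·h` with its translate by `s`
    rw [Fintype.prod_pi_fin_succ, Fintype.prod_bool, ← prod_mul_distrib]
    refine prod_congr rfl fun ω _ => ?_
    simp only [card_filter_cons_eq_true, sum_ite_cons, Bool.toNat_true, Bool.toNat_false,
      if_true, Bool.false_eq_true, if_false, zero_add, add_comm 1, conjPow_succ, mulDeriv,
      conjPow_mul]
    rw [mul_comm, add_comm s, add_assoc]
  have hsum : ∑ x : ZMod p, ∑ h : Fin (d + 1) → ZMod p, ∏ ω : Fin (d + 1) → Bool,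
        conjPow #{i | ω i = true} (g (x + ∑ i, if ω i then h i else 0))
      = ∑ s : ZMod p, ∑ x : ZMod p, ∑ h : Fin d → ZMod p, ∏ ω : Fin d → Bool,
        conjPow #{i | ω i = true} (mulDeriv s g (x + ∑ i, if ω i then h i else 0)) := by
    simp only [Fintype.sum_pi_fin_succ (β := ZMod p), cube]
    exact sum_comm
  rw [Fintype.expect_eq_sum_div_card, ZMod.card, gowersUavg_eq_conjPow, hsum]
  simp only [gowersUavg_eq_conjPow, ← mul_sum]
  field_simp
  ring

lemma Fintype.expect_comp_add_right {G M : Type*} [AddGroup G] [Fintype G] [AddCommMonoid M]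
    [Module ℚ≥0 M] (f : G → M) (a : G) : 𝔼 x, f (x + a) = 𝔼 x, f x :=
  Fintype.expect_equiv (Equiv.addRight a) _ _ fun _ => rfl

lemma Fintype.expect_comp_mul_right {K M : Type*} [GroupWithZero K] [Fintype K] [AddCommMonoid M]
    [Module ℚ≥0 M] (f : K → M) {a : K} (ha : a ≠ 0) : 𝔼 x, f (x * a) = 𝔼 x, f x :=
  Fintype.expect_equiv (Equiv.mulRight₀ a ha) _ _ fun _ => rfl

lemma conj_expect {ι : Type*} (s : Finset ι) (f : ι → ℂ) :
    conj (𝔼 i ∈ s, f i) = 𝔼 i ∈ s, conj (f i) :=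
  map_expect (starRingEnd ℂ) f s

lemma gowersUavg_zero (p : ℕ) [NeZero p] (g : ZMod p → ℂ) : gowersUavg p 0 g = 𝔼 x, g x := by
  simp [gowersUavg_eq_conjPow, conjPow, Fintype.expect_eq_sum_div_card, div_eq_inv_mul]

lemma gowersUavg_one (p : ℕ) [NeZero p] (g : ZMod p → ℂ) :
    gowersUavg p 1 g = ((‖𝔼 x, g x‖ ^ 2 : ℝ) : ℂ) := by
  have shift : ∀ x, 𝔼 s : ZMod p, conj (g (x + s)) = conj (𝔼 y, g y) := fun x => by
    rw [conj_expect, ← Fintype.expect_comp_add_right (fun y => conj (g y)) x]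
    simp only [add_comm]
  rw [← Complex.normSq_eq_norm_sq, ← Complex.mul_conj, gowersUavg_succ]
  simp only [gowersUavg_zero, mulDeriv]
  rw [expect_comm, expect_mul]
  simp only [← mul_expect, shift]

lemma gowersUavg_succ_re (p d : ℕ) [NeZero p] (g : ZMod p → ℂ) :
    (gowersUavg p (d + 1) g).re = 𝔼 s, (gowersUavg p d (mulDeriv s g)).re := by
  rw [gowersUavg_succ, Complex.re_expect]

lemma Finset.pow_expect_le_expect_pow {ι α : Type*} [Semifield α] [LinearOrder α]
    [IsStrictOrderedRing α] [ExistsAddOfLE α] {s : Finset ι} {f : ι → α}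
    (hf : ∀ i ∈ s, 0 ≤ f i) {n : ℕ} (hn : n ≠ 0) :
    (𝔼 i ∈ s, f i) ^ n ≤ 𝔼 i ∈ s, f i ^ n := by
  obtain ⟨m, rfl⟩ := Nat.exists_eq_succ_of_ne_zero hn
  rw [expect_eq_sum_div_card, expect_eq_sum_div_card, div_pow, pow_succ (#s : α), ← div_div]
  exact div_le_div_of_nonneg_right (pow_sum_div_card_le_sum_pow hf m) (Nat.cast_nonneg _)

lemma norm_expect_mul_sq_le {ι 𝕜 : Type*} [RCLike 𝕜] (s : Finset ι) {g : ι → 𝕜}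
    (hg : ∀ i ∈ s, ‖g i‖ ≤ 1) (a : ι → 𝕜) :
    ‖𝔼 i ∈ s, g i * a i‖ ^ 2 ≤ 𝔼 i ∈ s, ‖a i‖ ^ 2 := by
  have hle : ‖𝔼 i ∈ s, g i * a i‖ ≤ 𝔼 i ∈ s, ‖a i‖ := by
    refine (RCLike.norm_expect_le (K := 𝕜)).trans (expect_le_expect fun i hi => ?_)
    rw [norm_mul]
    exact mul_le_of_le_one_left (norm_nonneg _) (hg i hi)
  calc ‖𝔼 i ∈ s, g i * a i‖ ^ 2 ≤ (𝔼 i ∈ s, ‖a i‖) ^ 2 := by gcongr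
    _ ≤ 𝔼 i ∈ s, ‖a i‖ ^ 2 := pow_expect_le_expect_pow (fun _ _ => norm_nonneg _) two_ne_zero

noncomputable def patternAvg {p n : ℕ} [NeZero p] (c : Fin n → ZMod p)
    (F : Fin n → ZMod p → ℂ) : ℂ :=
  𝔼 m, 𝔼 j, ∏ i, F i (j + m * c i)

section Pattern

variable {p : ℕ} [NeZero p]

lemma patternAvg_eq_expect_last_mul {n : ℕ} (c : Fin (n + 1) → ZMod p)
    (F : Fin (n + 1) → ZMod p → ℂ) :
    patternAvg c F = 𝔼 y, F (Fin.last n) y *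
      𝔼 m, ∏ i : Fin n, F i.castSucc (y + m * (c i.castSucc - c (Fin.last n))) := by
  simp only [mul_expect]
  rw [expect_comm, patternAvg]
  refine expect_congr rfl fun m _ => ?_
  refine Eq.trans ?_ (Fintype.expect_comp_add_right _ (m * c (Fin.last n)))
  refine expect_congr rfl fun j _ => ?_
  rw [Fin.prod_univ_castSucc, mul_comm]
  congr 1
  refine prod_congr rfl fun i _ => ?_
  ring_nf

lemma expect_norm_sq_eq_expect_patternAvg_mulDeriv {n : ℕ} (d : Fin n → ZMod p)
    (G : Fin n → ZMod p → ℂ) :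
    ((𝔼 y, ‖𝔼 m, ∏ i, G i (y + m * d i)‖ ^ 2 : ℝ) : ℂ)
      = 𝔼 t, patternAvg d (fun i => mulDeriv (t * d i) (G i)) := by
  calc ((𝔼 y, ‖𝔼 m, ∏ i, G i (y + m * d i)‖ ^ 2 : ℝ) : ℂ)
      = 𝔼 y, 𝔼 m, 𝔼 t, ∏ i, mulDeriv (t * d i) (G i) (y + m * d i) := by
        push_cast [Complex.ofReal_expect]
        refine expect_congr rfl fun y _ => ?_
        rw [← Complex.mul_conj', conj_expect, expect_mul_expect]
        refine expect_congr rfl fun m _ => ?_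
        refine (Fintype.expect_comp_add_right _ m).symm.trans ?_
        refine expect_congr rfl fun t _ => ?_
        rw [map_prod, ← prod_mul_distrib]
        refine prod_congr rfl fun i _ => ?_
        rw [mulDeriv, add_mul, ← add_assoc, add_right_comm]
    _ = 𝔼 t, patternAvg d (fun i => mulDeriv (t * d i) (G i)) :=
        (expect_congr rfl fun _ _ => expect_comm _ _ _).trans
          ((expect_comm _ _ _).trans (expect_congr rfl fun _ _ => expect_comm _ _ _))

lemma norm_patternAvg_sq_le {n : ℕ} (c : Fin (n + 1) → ZMod p) (F : Fin (n + 1) → ZMod p → ℂ)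
    (hF : ∀ i x, ‖F i x‖ ≤ 1) :
    ‖patternAvg c F‖ ^ 2 ≤ 𝔼 t, ‖patternAvg (fun i : Fin n => c i.castSucc - c (Fin.last n))
      (fun i => mulDeriv (t * (c i.castSucc - c (Fin.last n))) (F i.castSucc))‖ := by
  rw [patternAvg_eq_expect_last_mul]
  refine (norm_expect_mul_sq_le _ (fun y _ => hF _ y) _).trans ?_
  rw [← Complex.ofReal_re (𝔼 y, _), expect_norm_sq_eq_expect_patternAvg_mulDeriv, Complex.re_expect]
  exact expect_le_expect fun t _ => Complex.re_le_norm _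

end Pattern

section PrimeModulus

variable {p : ℕ} [Fact p.Prime]

lemma norm_patternAvg_fin_two_sq_le (c : Fin 2 → ZMod p) (hc : c 0 ≠ c 1)
    (F : Fin 2 → ZMod p → ℂ) (hF : ∀ x, ‖F 1 x‖ ≤ 1) :
    ‖patternAvg c F‖ ^ 2 ≤ (gowersUavg p 1 (F 0)).re := by
  have hdil : ∀ y, 𝔼 m, F 0 (y + m * (c 0 - c 1)) = 𝔼 x, F 0 x := fun y => by
    rw [Fintype.expect_comp_mul_right (fun u => F 0 (y + u)) (sub_ne_zero.2 hc)]
    simpa only [add_comm y] using Fintype.expect_comp_add_right (F 0) y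
  have hΛ : patternAvg c F = (𝔼 y, F 1 y) * 𝔼 x, F 0 x := by
    rw [patternAvg_eq_expect_last_mul, expect_mul]
    simp only [Fin.prod_univ_one]
    exact expect_congr rfl fun y _ => congrArg (F 1 y * ·) (hdil y)
  have h1 : ‖𝔼 y, F 1 y‖ ≤ 1 :=
    (RCLike.norm_expect_le (K := ℂ)).trans (expect_le univ_nonempty fun y _ => hF y)
  rw [hΛ, gowersUavg_one, Complex.ofReal_re, norm_mul, mul_pow]
  exact mul_le_of_le_one_left (sq_nonneg _) (pow_le_one₀ (norm_nonneg _) h1)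

theorem norm_patternAvg_pow_le_gowersUavg (n : ℕ) (c : Fin (n + 2) → ZMod p)
    (hc : Function.Injective c) (F : Fin (n + 2) → ZMod p → ℂ) (hF : ∀ i x, ‖F i x‖ ≤ 1) :
    ‖patternAvg c F‖ ^ 2 ^ (n + 1) ≤ (gowersUavg p (n + 1) (F 0)).re := by
  induction n with
  | zero => simpa using norm_patternAvg_fin_two_sq_le c (hc.ne zero_ne_one) F (hF 1)
  | succ n ih =>
    set c' : Fin (n + 2) → ZMod p := fun i => c i.castSucc - c (Fin.last _)
    have hc' : Function.Injective c' := fun i j h =>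
      Fin.castSucc_injective _ (hc (sub_left_injective h))
    have hc'0 : c' 0 ≠ 0 := sub_ne_zero.2 (hc.ne (Fin.castSucc_lt_last 0).ne)
    calc ‖patternAvg c F‖ ^ 2 ^ (n + 2) = (‖patternAvg c F‖ ^ 2) ^ 2 ^ (n + 1) := by
          rw [← pow_mul, ← pow_succ']
      _ ≤ (𝔼 t, ‖patternAvg c' fun i => mulDeriv (t * c' i) (F i.castSucc)‖) ^ 2 ^ (n + 1) := by
          gcongr
          exact norm_patternAvg_sq_le c F hF
      _ ≤ 𝔼 t, ‖patternAvg c' fun i => mulDeriv (t * c' i) (F i.castSucc)‖ ^ 2 ^ (n + 1) :=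
          pow_expect_le_expect_pow (fun _ _ => norm_nonneg _) (by positivity)
      _ ≤ 𝔼 t, (gowersUavg p (n + 1) (mulDeriv (t * c' 0) (F 0))).re :=
          expect_le_expect fun t _ =>
            ih c' hc' _ fun i => norm_mulDeriv_le_one (hF i.castSucc) _
      _ = 𝔼 s, (gowersUavg p (n + 1) (mulDeriv s (F 0))).re :=
          Fintype.expect_comp_mul_right (fun s => (gowersUavg p (n + 1) (mulDeriv s (F 0))).re) hc'0
      _ = (gowersUavg p (n + 2) (F 0)).re := (gowersUavg_succ_re _ _ _).symm

end PrimeModulus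

/-- Generalized von Neumann inequality in `ℤ/pℤ`: for `1`-bounded `f₁,...,f_k` and
distinct nonzero `b₂,...,b_k` (with `b₁ = 0`),
`|E_{m,j} f₁(j) f₂(j+m b₂) ⋯ f_k(j+m b_k)| ≤ ‖f₁‖_{U^{k-1}}`. -/
theorem generalized_von_neumann (p k : ℕ) [Fact p.Prime] (hk : 2 ≤ k)
    (b : Fin k → ZMod p)
    (hbinj : Function.Injective b)
    (f : Fin k → ZMod p → ℂ) (hf : ∀ i x, ‖f i x‖ ≤ 1) :
    ‖(1 / (p : ℂ) ^ 2) *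
        ∑ m : ZMod p, ∑ j : ZMod p, ∏ i, f i (j + m * b i)‖ ≤
      gowersNorm p (k - 1) (f ⟨0, by omega⟩) := by
  obtain ⟨n, rfl⟩ : ∃ n, k = n + 2 := ⟨k - 2, by omega⟩
  have hΛ : (1 / (p : ℂ) ^ 2) * ∑ m : ZMod p, ∑ j : ZMod p, ∏ i, f i (j + m * b i)
      = patternAvg b f := by
    simp only [patternAvg, Fintype.expect_eq_sum_div_card, ZMod.card, ← sum_div]
    ring
  have hkey := norm_patternAvg_pow_le_gowersUavg n b hbinj f hf
  rw [hΛ]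
  change _ ≤ (gowersUavg p (n + 1) (f 0)).re ^ ((1 : ℝ) / 2 ^ (n + 1))
  rw [one_div, Real.le_rpow_inv_iff_of_pos (norm_nonneg _)
    ((by positivity : (0 : ℝ) ≤ _).trans hkey) (by positivity)]
  exact_mod_cast hkey
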